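/- Let S be a symmetric numerical semigroup and let x∈S be nonzero. Then β_i(x) = β_{d(x)−i}(x) for all 0 ≤ i ≤ ⌊(d(x)+1)/2⌋ if and only if S is M-pure with respect to x. -/

import Mathlib

open scoped Pointwise

/-- `S ⊆ ℕ` is a numerical semigroup: it contains `0`, is closed under
addition, and has finite complement in `ℕ`. -/
def IsNumSgp (S : Set ℕ) : Prop :=
  (0 : ℕ) ∈ S ∧ (∀ a ∈ S, ∀ b ∈ S, a + b ∈ S) ∧ {x : ℕ | x ∉ S}.Finite

/-- `nM S t` is the `t`-fold sumset of the maximal ideal `M = S \ {0}`,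
with the convention `nM S 0 = S`. -/
def nM (S : Set ℕ) : ℕ → Set ℕ
  | 0 => S
  | t + 1 => (S \ {0}) + nM S t

/-- the order of `s` with respect to `S` : the largest `t` with `s ∈ tM`. -/
noncomputable def ordS (S : Set ℕ) (s : ℕ) : ℕ := sSup {t : ℕ | s ∈ nM S t}

/-- the multiplicity of `S` : its least nonzero element. -/
noncomputable def mult (S : Set ℕ) : ℕ := sInf {x : ℕ | x ∈ S ∧ x ≠ 0}

/-- the Apéry set of `S` with respect to `x` : elements `s ∈ S` with `s - x ∉ S`. -/
def Ap (S : Set ℕ) (x : ℕ) : Set ℕ := {s : ℕ | s ∈ S ∧ ¬ ∃ t ∈ S, s = t + x}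

/-- membership of an integer in (the image in `ℤ` of) `S`. -/
def zmem (S : Set ℕ) (z : ℤ) : Prop := ∃ t ∈ S, (t : ℤ) = z

/-- the Frobenius number of `S` : the largest integer not in `S`. -/
noncomputable def Frob (S : Set ℕ) : ℤ := sSup {z : ℤ | ¬ zmem S z}

/-- `S` is symmetric: for every integer `z`, `z ∈ S` iff `F(S) - z ∉ S`. -/
def IsSymmetric (S : Set ℕ) : Prop := ∀ z : ℤ, zmem S z ↔ ¬ zmem S (Frob S - z)

/-- the set of maximal elements of `Ap S x` with respect to the order
`u ⪯ v` iff `v = u + z` for some `z ∈ S`. -/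
def MaxAp (S : Set ℕ) (x : ℕ) : Set ℕ :=
  {w : ℕ | w ∈ Ap S x ∧ ∀ y ∈ Ap S x, (∃ z ∈ S, y = w + z) → y = w}

/-- the set of maximal elements of `Ap S x` with respect to the order
`u ⪯_M v` iff `v = u + z` for some `z ∈ S` with `ord(v) = ord(u) + ord(z)`. -/
def MaxMAp (S : Set ℕ) (x : ℕ) : Set ℕ :=
  {w : ℕ | w ∈ Ap S x ∧ ∀ y ∈ Ap S x,
    (∃ z ∈ S, y = w + z ∧ ordS S y = ordS S w + ordS S z) → y = w}

/-- `S` is M-pure with respect to `x` : all maximal elements of `Ap S x`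
under `⪯_M` have the same order. -/
def MPureWrt (S : Set ℕ) (x : ℕ) : Prop :=
  ∀ w ∈ MaxMAp S x, ∀ w' ∈ MaxMAp S x, ordS S w = ordS S w'

/-- `S` is M-pure : it is M-pure with respect to its multiplicity. -/
def MPure (S : Set ℕ) : Prop := MPureWrt S (mult S)

/-- `β_i(x)` : the number of elements of `Ap S x` of order `i`. -/
noncomputable def betaS (S : Set ℕ) (x i : ℕ) : ℕ := {w ∈ Ap S x | ordS S w = i}.ncard

/-- `d(x)` : the maximal order of an element of `Ap S x`. -/
noncomputable def dS (S : Set ℕ) (x : ℕ) : ℕ := sSup (ordS S '' Ap S x)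

/-- the reduction number of `S` : the least `r` with `(r+1)M = m(S) + rM`. -/
noncomputable def redNum (S : Set ℕ) : ℕ :=
  sInf {r : ℕ | nM S (r + 1) = (fun y => mult S + y) '' nM S r}

/-- `l_x(S) = max { ord(s+x) - ord(x) - ord(s) : s ∈ S, ord(s) ≤ r }`. -/
noncomputable def lS (S : Set ℕ) (x : ℕ) : ℕ :=
  sSup {t : ℕ | ∃ s ∈ S, ordS S s ≤ redNum S ∧ t = ordS S (s + x) - ordS S x - ordS S s}

/-- the Hilbert function of `S`. -/
noncomputable def HilbS (S : Set ℕ) (t : ℕ) : ℕ := (nM S t \ nM S (t + 1)).ncard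

/-- The data of a gluing `S = ⟨q m₁, …, q m_d, p n₁, …, p n_k⟩` of two numerical
semigroups `S₁ = ⟨m₁, …, m_d⟩` and `S₂ = ⟨n₁, …, n_k⟩`, minimally generated by
`m₁ < ⋯ < m_d` and `n₁ < ⋯ < n_k`, where `p ∈ S₁ \ {m₁, …, m_d}`,
`q ∈ S₂ \ {n₁, …, n_k}` and `gcd(p, q) = 1`. -/
structure Gluing where
  d : ℕ
  k : ℕ
  hd : 0 < d
  hk : 0 < k
  m : Fin d → ℕ
  n : Fin k → ℕ
  p : ℕ
  q : ℕ
  hm : StrictMono m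
  hn : StrictMono n
  hmin₁ : ∀ i, m i ∉ AddSubmonoid.closure (Set.range m \ {m i})
  hmin₂ : ∀ j, n j ∉ AddSubmonoid.closure (Set.range n \ {n j})
  hnum₁ : IsNumSgp (AddSubmonoid.closure (Set.range m) : Set ℕ)
  hnum₂ : IsNumSgp (AddSubmonoid.closure (Set.range n) : Set ℕ)
  hp : p ∈ AddSubmonoid.closure (Set.range m)
  hq : q ∈ AddSubmonoid.closure (Set.range n)
  hpm : p ∉ Set.range m
  hqn : q ∉ Set.range n
  hpq : Nat.gcd p q = 1

/-- the numerical semigroup `S₁ = ⟨m₁, …, m_d⟩`. -/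
def Gluing.S₁ (G : Gluing) : Set ℕ := (AddSubmonoid.closure (Set.range G.m) : Set ℕ)

/-- the numerical semigroup `S₂ = ⟨n₁, …, n_k⟩`. -/
def Gluing.S₂ (G : Gluing) : Set ℕ := (AddSubmonoid.closure (Set.range G.n) : Set ℕ)

/-- the glued numerical semigroup `S = ⟨q m₁, …, q m_d, p n₁, …, p n_k⟩`. -/
def Gluing.S (G : Gluing) : Set ℕ :=
  (AddSubmonoid.closure
    ((fun x => G.q * x) '' Set.range G.m ∪ (fun x => G.p * x) '' Set.range G.n) : Set ℕ)

/-- the smallest generator `m₁` of `S₁`. -/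
def Gluing.m₁ (G : Gluing) : ℕ := G.m ⟨0, G.hd⟩

/-- the smallest generator `n₁` of `S₂`. -/
def Gluing.n₁ (G : Gluing) : ℕ := G.n ⟨0, G.hk⟩

/-- the gluing is specific if `ord_{S₂}(q) + l_q(S₂) ≤ ord_{S₁}(p)`. -/
def Gluing.Specific (G : Gluing) : Prop := ordS G.S₂ G.q + lS G.S₂ G.q ≤ ordS G.S₁ G.p

/-- the gluing is nice if `q = a n₁` for some `1 < a ≤ ord_{S₁}(p)`. -/
def Gluing.Nice (G : Gluing) : Prop := ∃ a : ℕ, 1 < a ∧ a ≤ ordS G.S₁ G.p ∧ G.q = a * G.n₁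

/-! For symmetric `S` and `f = F(S) + x`, the map `w ↦ f - w` is an involution of `AP(S,x)`, and
superadditivity of the order gives `ord w + ord (f - w) ≤ ord f = d(x)`. Both conditions of the
theorem are equivalent to equality here for every `w`. M-purity forces it: every `w` lies
`⪯_M`-below a maximal `w' = w + z`, which has order `ord f`, and `f - w = (f - w') + z`. Symmetry
of the `β_i` forces it: it makes `∑ ord w` over `AP(S,x)` equal to `∑ (d - ord w)`, so the
inequalities sum to an equality. -/

section Order

variable {S : Set ℕ}

lemma le_of_mem_nM {s : ℕ} : ∀ {t : ℕ}, s ∈ nM S t → t ≤ s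
  | 0, _ => Nat.zero_le s
  | t + 1, hs => by
    obtain ⟨a, ⟨-, ha0⟩, b, hb, rfl⟩ := Set.mem_add.1 hs
    have : a ≠ 0 := ha0
    have := le_of_mem_nM hb
    omega

lemma add_mem_nM (hS : IsNumSgp S) {a b : ℕ} (ha : a ∈ S) : ∀ {t : ℕ}, b ∈ nM S t → a + b ∈ nM S t
  | 0, hb => hS.2.1 a ha b hb
  | t + 1, hb => by
    obtain ⟨m, hm, c, hc, rfl⟩ := Set.mem_add.1 hb
    exact Set.mem_add.2 ⟨m, hm, a + c, add_mem_nM hS ha hc, by ring⟩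

lemma nM_antitone (hS : IsNumSgp S) : Antitone (nM S) := by
  refine antitone_nat_of_succ_le fun t s hs => ?_
  obtain ⟨a, ha, b, hb, rfl⟩ := Set.mem_add.1 hs
  exact add_mem_nM hS ha.1 hb

lemma add_mem_nM_add (hS : IsNumSgp S) {a b : ℕ} :
    ∀ {p q : ℕ}, a ∈ nM S p → b ∈ nM S q → a + b ∈ nM S (p + q)
  | 0, _, ha, hb => by simpa using add_mem_nM hS ha hb
  | p + 1, q, ha, hb => by
    obtain ⟨m, hm, c, hc, rfl⟩ := Set.mem_add.1 ha
    rw [Nat.add_right_comm, add_assoc]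
    exact Set.mem_add.2 ⟨m, hm, c + b, add_mem_nM_add hS hc hb, (add_assoc m c b).symm⟩

lemma mem_nM_ordS {s : ℕ} (hs : s ∈ S) : s ∈ nM S (ordS S s) :=
  Nat.sSup_mem (s := {t | s ∈ nM S t}) ⟨0, hs⟩ ⟨s, fun _ => le_of_mem_nM⟩

lemma mem_nM_iff_le_ordS (hS : IsNumSgp S) {s : ℕ} (hs : s ∈ S) {t : ℕ} :
    s ∈ nM S t ↔ t ≤ ordS S s :=
  ⟨fun h => le_csSup ⟨s, fun _ => le_of_mem_nM⟩ h, fun h => nM_antitone hS h (mem_nM_ordS hs)⟩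

lemma ordS_add_ordS_le (hS : IsNumSgp S) {a b : ℕ} (ha : a ∈ S) (hb : b ∈ S) :
    ordS S a + ordS S b ≤ ordS S (a + b) :=
  (mem_nM_iff_le_ordS hS (hS.2.1 a ha b hb)).1 (add_mem_nM_add hS (mem_nM_ordS ha) (mem_nM_ordS hb))

lemma ordS_zero : ordS S 0 = 0 :=
  Nat.eq_zero_of_le_zero (csSup_le' fun _ => le_of_mem_nM)

end Order

section Frobenius

variable {S : Set ℕ}

lemma zmem_natCast {n : ℕ} : zmem S n ↔ n ∈ S :=
  ⟨fun ⟨_, ht, htn⟩ => Nat.cast_injective htn ▸ ht, fun h => ⟨n, h, rfl⟩⟩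

lemma le_Frob (hS : IsNumSgp S) {z : ℤ} (hz : ¬ zmem S z) : z ≤ Frob S := by
  refine le_csSup ?_ hz
  obtain ⟨B, hB⟩ := hS.2.2.bddAbove
  refine ⟨B, fun z hz => ?_⟩
  by_contra! hBz
  have : z.toNat ∉ S := fun h => hz ⟨z.toNat, h, by omega⟩
  have := hB this
  omega

lemma neg_one_le_Frob (hS : IsNumSgp S) : -1 ≤ Frob S :=
  le_Frob hS fun ⟨_, _, ht⟩ => by omega

end Frobenius

open Finset in
theorem Finset.sum_tsub_eq_sum_of_card_fiber_symm {α : Type*} (s : Finset α) (g : α → ℕ) {d : ℕ}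
    (hle : ∀ a ∈ s, g a ≤ d) (hsymm : ∀ i ≤ d, #{a ∈ s | g a = i} = #{a ∈ s | g a = d - i}) :
    ∑ a ∈ s, (d - g a) = ∑ a ∈ s, g a := by
  have sum_eq_sum_fiber (h : ℕ → ℕ) :
      ∑ a ∈ s, h (g a) = ∑ i ∈ range (d + 1), #{a ∈ s | g a = i} * h i := by
    rw [← sum_fiberwise_of_maps_to fun a ha => mem_range_succ_iff.2 (hle a ha)]
    exact sum_congr rfl fun i _ => sum_const_nat fun a ha => by rw [(mem_filter.1 ha).2]
  calc ∑ a ∈ s, (d - g a)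
      = ∑ i ∈ range (d + 1), #{a ∈ s | g a = d - i} * (d - i) := by
        rw [sum_eq_sum_fiber (d - ·)]
        exact sum_congr rfl fun i hi => by rw [hsymm i (mem_range_succ_iff.1 hi)]
    _ = ∑ i ∈ range (d + 1), #{a ∈ s | g a = i} * i :=
        sum_range_reflect (fun i => #{a ∈ s | g a = i} * i) (d + 1)
    _ = ∑ a ∈ s, g a := (sum_eq_sum_fiber id).symm

lemma forall_le_half_eq_sub_iff {α : Type*} (b : ℕ → α) (d : ℕ) :
    (∀ i ≤ (d + 1) / 2, b i = b (d - i)) ↔ ∀ i ≤ d, b i = b (d - i) := by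
  refine ⟨fun h i hi => ?_, fun h i hi => h i (by omega)⟩
  by_cases hhalf : i ≤ (d + 1) / 2
  · exact h i hhalf
  · rw [h (d - i) (by omega), Nat.sub_sub_self hi]

structure ApSymmetric (S : Set ℕ) (x f : ℕ) : Prop where
  zero_mem : 0 ∈ Ap S x
  le_of_mem : ∀ w ∈ Ap S x, w ≤ f
  sub_mem : ∀ w ∈ Ap S x, f - w ∈ Ap S x

theorem apSymmetric_of_isSymmetric {S : Set ℕ} {x f : ℕ} (hS : IsNumSgp S) (hsym : IsSymmetric S)
    (hx0 : x ≠ 0) (hf : (f : ℤ) = Frob S + x) : ApSymmetric S x f := by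
  have not_zmem_sub {w : ℕ} (hw : w ∈ Ap S x) : ¬ zmem S ((w : ℤ) - x) :=
    fun ⟨t, ht, htw⟩ => hw.2 ⟨t, ht, by omega⟩
  have le_of_mem (w : ℕ) (hw : w ∈ Ap S x) : w ≤ f := by
    have := le_Frob hS (not_zmem_sub hw)
    omega
  refine ⟨⟨hS.1, fun ⟨t, _, ht⟩ => by omega⟩, le_of_mem, fun w hw => ⟨?_, ?_⟩⟩
  · have hwf := le_of_mem w hw
    rw [← zmem_natCast, hsym, Nat.cast_sub hwf]
    convert not_zmem_sub hw using 2
    omega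
  · rintro ⟨t, ht, hft⟩
    refine (hsym w).1 (zmem_natCast.2 hw.1) ⟨t, ht, ?_⟩
    have := le_of_mem w hw
    omega

def ApOrdSymmetric (S : Set ℕ) (x f : ℕ) : Prop :=
  ∀ w ∈ Ap S x, ordS S w + ordS S (f - w) = ordS S f

/-- `u ⪯_M v`. -/
def MLe (S : Set ℕ) (u v : ℕ) : Prop :=
  ∃ z ∈ S, v = u + z ∧ ordS S v = ordS S u + ordS S z

lemma MLe.trans {S : Set ℕ} (hS : IsNumSgp S) {u v w : ℕ} (hu : u ∈ S)
    (huv : MLe S u v) (hvw : MLe S v w) : MLe S u w := by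
  obtain ⟨z, hz, rfl, hv⟩ := huv
  obtain ⟨z', hz', rfl, hw⟩ := hvw
  refine ⟨z + z', hS.2.1 z hz z' hz', by ring, le_antisymm ?_ ?_⟩
  · have := ordS_add_ordS_le hS hz hz'
    omega
  · simpa only [add_assoc] using ordS_add_ordS_le hS hu (hS.2.1 z hz z' hz')

namespace ApSymmetric

open Finset

variable {S : Set ℕ} {x f : ℕ} (hA : ApSymmetric S x f)
include hA

lemma finite : (Ap S x).Finite :=
  (Set.finite_Iic f).subset hA.le_of_mem

lemma self_mem : f ∈ Ap S x := by
  simpa using hA.sub_mem 0 hA.zero_mem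

lemma ordS_add_ordS_sub_le (hS : IsNumSgp S) {w : ℕ} (hw : w ∈ Ap S x) :
    ordS S w + ordS S (f - w) ≤ ordS S f := by
  simpa [Nat.add_sub_cancel' (hA.le_of_mem w hw)] using
    ordS_add_ordS_le hS hw.1 (hA.sub_mem w hw).1

lemma dS_eq (hS : IsNumSgp S) : dS S x = ordS S f :=
  le_antisymm
    (csSup_le ⟨_, 0, hA.zero_mem, rfl⟩ (by
      rintro _ ⟨w, hw, rfl⟩
      exact (Nat.le_add_right _ _).trans (hA.ordS_add_ordS_sub_le hS hw)))
    (le_csSup (hA.finite.image _).bddAbove ⟨f, hA.self_mem, rfl⟩)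

lemma sub_sub_self {w : ℕ} (hw : w ∈ Ap S x) : f - (f - w) = w :=
  Nat.sub_sub_self (hA.le_of_mem w hw)

lemma self_mem_MaxMAp : f ∈ MaxMAp S x :=
  ⟨hA.self_mem, fun y hy ⟨z, _, hyz, _⟩ => by have := hA.le_of_mem y hy; omega⟩

lemma exists_MLe_mem_MaxMAp (hS : IsNumSgp S) {w : ℕ} (hw : w ∈ Ap S x) :
    ∃ w' ∈ MaxMAp S x, MLe S w w' := by
  obtain ⟨w', ⟨hw'A, hww'⟩, hmax⟩ := Set.exists_max_image {y ∈ Ap S x | MLe S w y} id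
    (hA.finite.subset fun _ hy => hy.1) ⟨w, hw, 0, hS.1, by simp [ordS_zero]⟩
  refine ⟨w', ⟨hw'A, fun y hy hw'y => ?_⟩, hww'⟩
  have := hmax y ⟨hy, hww'.trans hS hw.1 hw'y⟩
  obtain ⟨z, -, rfl, -⟩ := hw'y
  simp only [id] at this
  omega

theorem apOrdSymmetric_iff_mPureWrt (hS : IsNumSgp S) : ApOrdSymmetric S x f ↔ MPureWrt S x := by
  constructor
  · intro hO
    have eq_self : ∀ w ∈ MaxMAp S x, w = f := fun w hw =>
      (hw.2 f hA.self_mem ⟨f - w, (hA.sub_mem w hw.1).1,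
        (Nat.add_sub_cancel' (hA.le_of_mem w hw.1)).symm, (hO w hw.1).symm⟩).symm
    intro w hw w' hw'
    rw [eq_self w hw, eq_self w' hw']
  · intro hpure w hw
    obtain ⟨w', hw', z, hz, rfl, hord⟩ := hA.exists_MLe_mem_MaxMAp hS hw
    have hpure' := hpure _ hw' f hA.self_mem_MaxMAp
    have hsplit := ordS_add_ordS_le hS (hA.sub_mem _ hw'.1).1 hz
    rw [show f - (w + z) + z = f - w by have := hA.le_of_mem _ hw'.1; omega] at hsplit
    have := hA.ordS_add_ordS_sub_le hS hw
    omega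

lemma betaS_eq_card_filter (i : ℕ) :
    betaS S x i = #{w ∈ hA.finite.toFinset | ordS S w = i} := by
  rw [betaS, ← Set.ncard_coe_finset]
  congr 1
  ext w
  simp

lemma sum_comp_sub {M : Type*} [AddCommMonoid M] (g : ℕ → M) :
    ∑ w ∈ hA.finite.toFinset, g (f - w) = ∑ w ∈ hA.finite.toFinset, g w := by
  have hmaps : ∀ w ∈ hA.finite.toFinset, f - w ∈ hA.finite.toFinset := by simpa using hA.sub_mem
  have hinv : ∀ w ∈ hA.finite.toFinset, f - (f - w) = w := by
    simpa using fun w (hw : w ∈ Ap S x) => hA.sub_sub_self hw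
  exact sum_nbij' (f - ·) (f - ·) hmaps hmaps hinv hinv fun _ _ => rfl

theorem apOrdSymmetric_iff_betaS (hS : IsNumSgp S) :
    ApOrdSymmetric S x f ↔ ∀ i ≤ ordS S f, betaS S x i = betaS S x (ordS S f - i) := by
  constructor
  · intro hO i hi
    refine Set.ncard_congr (fun w _ => f - w) (fun w ⟨hw, hwi⟩ => ⟨hA.sub_mem w hw, ?_⟩)
      (fun a b ⟨ha, _⟩ ⟨hb, _⟩ hab => by rw [← hA.sub_sub_self ha, hab, hA.sub_sub_self hb])
      (fun w ⟨hw, hwi⟩ => ⟨f - w, ⟨hA.sub_mem w hw, ?_⟩, hA.sub_sub_self hw⟩)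
    · have := hO w hw
      omega
    · have := hO w hw
      omega
  · intro hβ
    set A := hA.finite.toFinset
    have hle (w : ℕ) (hw : w ∈ A) : ordS S w + ordS S (f - w) ≤ ordS S f :=
      hA.ordS_add_ordS_sub_le hS (hA.finite.mem_toFinset.1 hw)
    have hdual : ∑ w ∈ A, (ordS S f - ordS S w) = ∑ w ∈ A, ordS S w :=
      A.sum_tsub_eq_sum_of_card_fiber_symm _ (fun w hw => by have := hle w hw; omega)
        fun i hi => by rw [← hA.betaS_eq_card_filter, ← hA.betaS_eq_card_filter, hβ i hi]
    have hsum : ∑ w ∈ A, (ordS S w + ordS S (f - w)) =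
        ∑ w ∈ A, (ordS S w + (ordS S f - ordS S w)) := by
      rw [sum_add_distrib, sum_add_distrib, hA.sum_comp_sub, hdual]
    intro w hw
    have hwA : w ∈ A := hA.finite.mem_toFinset.2 hw
    have := (sum_eq_sum_iff_of_le fun w hw => by have := hle w hw; omega).1 hsum w hwA
    have := hle w hwA
    omega

end ApSymmetric

theorem stmt4_general (S : Set ℕ) (hS : IsNumSgp S) (hsym : IsSymmetric S)
    (x : ℕ) (hx0 : x ≠ 0) :
    (∀ i : ℕ, i ≤ (dS S x + 1) / 2 → betaS S x i = betaS S x (dS S x - i)) ↔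
      MPureWrt S x := by
  obtain ⟨f, hf⟩ : ∃ f : ℕ, (f : ℤ) = Frob S + x :=
    ⟨(Frob S + x).toNat, by have := neg_one_le_Frob hS; omega⟩
  have hA := apSymmetric_of_isSymmetric hS hsym hx0 hf
  rw [hA.dS_eq hS, forall_le_half_eq_sub_iff (betaS S x), ← hA.apOrdSymmetric_iff_betaS hS,
    hA.apOrdSymmetric_iff_mPureWrt hS]

/-- for a symmetric numerical semigroup `S` and nonzero `x ∈ S`,
`β_i(x) = β_{d(x)-i}(x)` for all `0 ≤ i ≤ ⌊(d(x)+1)/2⌋` iff `S` is M-pure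
with respect to `x`. -/
theorem stmt4 (S : Set ℕ) (hS : IsNumSgp S) (hsym : IsSymmetric S)
    (x : ℕ) (hx : x ∈ S) (hx0 : x ≠ 0) :
    (∀ i : ℕ, i ≤ (dS S x + 1) / 2 → betaS S x i = betaS S x (dS S x - i)) ↔
      MPureWrt S x :=
  stmt4_general S hS hsym x hx0
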